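/- Suppose ψ₁, ψ₂ : [0,∞) → ℝ are right-continuous functions with left-hand limits that are bounded on every compact interval, with ψ₁(0) ≥ ψ₂(0) ≥ 0. If ψ₁ strongly majorises ψ₂, i.e. the function t ↦ ψ₁(t) − ψ₂(t) is nondecreasing on [0,∞), then Γ(ψ₁)(t) ≥ Γ(ψ₂)(t) for all t ≥ 0, where Γ(ψ)(t) = ψ(t) − min(0, inf_{s∈[0,t]} ψ(s)). -/

import Mathlib

open Set Filter

/-!
Put `D = ψ₁ t - ψ₂ t`. Majorisation gives `ψ₁ s - ψ₂ s ≤ D` for `s ≤ t`, so the running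
infimum of `ψ₂` is at least that of `ψ₁` minus `D`, and `D ≥ ψ₁ 0 - ψ₂ 0 ≥ 0`. Hence the
regulator `-min 0 (inf ψ)` of `ψ₂` exceeds that of `ψ₁` by at most `D`, which is exactly the
gain `ψ₁ t - ψ₂ t` in the free part.
-/

noncomputable def skorohodReflection (ψ : ℝ → ℝ) (t : ℝ) : ℝ :=
  ψ t - min 0 (sInf (ψ '' Icc 0 t))

lemma sInf_image_sub_le_sInf_image {ι : Type*} {s : Set ι} {f g : ι → ℝ} {D : ℝ}
    (hs : s.Nonempty) (hf : BddBelow (f '' s)) (hfg : ∀ x ∈ s, f x - g x ≤ D) :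
    sInf (f '' s) - D ≤ sInf (g '' s) := by
  refine le_csInf (hs.image g) ?_
  rintro _ ⟨x, hx, rfl⟩
  have := csInf_le hf (mem_image_of_mem f hx)
  linarith [hfg x hx]

lemma min_zero_le_add_min_zero {α : Type*} [AddCommGroup α] [LinearOrder α]
    [IsOrderedAddMonoid α] {a b D : α} (hD : 0 ≤ D) (hab : a - D ≤ b) :
    min 0 a ≤ D + min 0 b := by
  rw [← min_add_add_left, add_zero]
  exact le_min (min_le_left _ _ |>.trans hD)
    (min_le_right _ _ |>.trans (sub_le_iff_le_add'.mp hab))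

lemma skorohodReflection_le {ψ₁ ψ₂ : ℝ → ℝ} {t : ℝ} (ht : 0 ≤ t)
    (hbdd : BddBelow (ψ₁ '' Icc 0 t)) (hpos : ψ₂ t ≤ ψ₁ t)
    (hsub : ∀ s ∈ Icc 0 t, ψ₁ s - ψ₂ s ≤ ψ₁ t - ψ₂ t) :
    skorohodReflection ψ₂ t ≤ skorohodReflection ψ₁ t := by
  have hinf := sInf_image_sub_le_sInf_image ⟨0, left_mem_Icc.mpr ht⟩ hbdd hsub
  have := min_zero_le_add_min_zero (sub_nonneg.mpr hpos) hinf
  unfold skorohodReflection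
  linarith

theorem skorohod_map_majorisation_general
    (ψ₁ ψ₂ : ℝ → ℝ)
    (h₁bd : ∀ t, 0 ≤ t → BddBelow (ψ₁ '' Icc 0 t) ∧ BddAbove (ψ₁ '' Icc 0 t))
    (h0 : ψ₂ 0 ≤ ψ₁ 0)
    (hmaj : MonotoneOn (fun t => ψ₁ t - ψ₂ t) (Ici 0)) :
    ∀ t, 0 ≤ t →
      ψ₂ t - min 0 (sInf (ψ₂ '' Icc 0 t)) ≤ ψ₁ t - min 0 (sInf (ψ₁ '' Icc 0 t)) := by
  intro t ht
  have hsub : ∀ s ∈ Icc 0 t, ψ₁ s - ψ₂ s ≤ ψ₁ t - ψ₂ t := fun s hs =>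
    hmaj (mem_Ici.mpr hs.1) (mem_Ici.mpr ht) hs.2
  have hpos : ψ₂ t ≤ ψ₁ t := by
    linarith [hsub 0 (left_mem_Icc.mpr ht)]
  exact skorohodReflection_le ht (h₁bd t ht).1 hpos hsub

/-- Majorisation property of the Skorohod reflection map
`Γ(ψ)(t) = ψ t - min 0 (inf_{s ∈ [0,t]} ψ s)`: if `ψ₁, ψ₂ : [0,∞) → ℝ` are
right-continuous with left-hand limits, bounded on compact intervals, satisfy
`ψ₁ 0 ≥ ψ₂ 0 ≥ 0`, and `ψ₁` strongly majorises `ψ₂` (i.e. `ψ₁ - ψ₂` is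
nondecreasing on `[0,∞)`), then `Γ(ψ₁)(t) ≥ Γ(ψ₂)(t)` for all `t ≥ 0`. -/
theorem skorohod_map_majorisation
    (ψ₁ ψ₂ : ℝ → ℝ)
    (h₁rc : ∀ t, 0 ≤ t → ContinuousWithinAt ψ₁ (Ici t) t)
    (h₂rc : ∀ t, 0 ≤ t → ContinuousWithinAt ψ₂ (Ici t) t)
    (h₁ll : ∀ t, 0 < t → ∃ L, Tendsto ψ₁ (nhdsWithin t (Iio t)) (nhds L))
    (h₂ll : ∀ t, 0 < t → ∃ L, Tendsto ψ₂ (nhdsWithin t (Iio t)) (nhds L))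
    (h₁bd : ∀ t, 0 ≤ t → BddBelow (ψ₁ '' Icc 0 t) ∧ BddAbove (ψ₁ '' Icc 0 t))
    (h₂bd : ∀ t, 0 ≤ t → BddBelow (ψ₂ '' Icc 0 t) ∧ BddAbove (ψ₂ '' Icc 0 t))
    (h0 : ψ₂ 0 ≤ ψ₁ 0) (h0' : 0 ≤ ψ₂ 0)
    (hmaj : MonotoneOn (fun t => ψ₁ t - ψ₂ t) (Ici 0)) :
    ∀ t, 0 ≤ t →
      ψ₂ t - min 0 (sInf (ψ₂ '' Icc 0 t)) ≤ ψ₁ t - min 0 (sInf (ψ₁ '' Icc 0 t)) :=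
  skorohod_map_majorisation_general ψ₁ ψ₂ h₁bd h0 hmaj
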